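/- For α ≥ -1/2 and all u > 0, |I_{α+1}(u) - I_α(u)| ≲ u^{-1} I_{α+1}(u), i.e. there exists a constant C (depending only on α) such that |I_{α+1}(u) - I_α(u)| ≤ C u^{-1} I_{α+1}(u) for all u > 0. -/

import Mathlib

/-!
Write `α + 1 = p + 1/2` with `p ≥ 0`. Expanding `exp (u t)` and evaluating the moments of the
weight `(1 - t²)^p` as Beta integrals gives Poisson's integrals
`I_{p+1/2}(u) = c ∫_{-1}^1 e^{ut} (1 - t²)^p dt` and `I_{p+3/2}(u) = c ∫_{-1}^1 e^{ut} t (1 - t²)^p dt`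
with the same constant `c > 0`. Hence `I_{α+1} - I_{α+2} = c ∫ e^{ut} (1 - t) (1 - t²)^p dt ≥ 0`,
and `u (1 - t) e^{ut} ≤ 2 e^{u(1+t)/2}` followed by the substitution `x = (1 + t)/2` bounds `u` times
it by `4^{p+1} I_{α+1}`. The recurrence `I_α = 2 (α + 1) u⁻¹ I_{α+1} + I_{α+2}` then expresses
`I_{α+1} - I_α` as the difference of two nonnegative quantities, both `O(u⁻¹ I_{α+1})`.
-/

open Real

/-- The modified Bessel function of the first kind of order `s`, via its power series. -/
noncomputable def besselI (s u : ℝ) : ℝ :=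
  ∑' m : ℕ, (u / 2) ^ (2 * m) * (u / 2) ^ s / (Nat.factorial m * Real.Gamma (m + s + 1))

open Filter Nat MeasureTheory intervalIntegral Set

lemma hasSum_two_mul_of_odd_eq_zero {α : Type*} [AddCommMonoid α] [TopologicalSpace α]
    {f : ℕ → α} {a : α} (hf : HasSum f a) (hodd : ∀ m, f (2 * m + 1) = 0) :
    HasSum (fun m => f (2 * m)) a := by
  refine ((mul_right_injective₀ two_ne_zero).hasSum_iff fun n hn => ?_).mpr hf
  obtain ⟨m, rfl | rfl⟩ := Nat.even_or_odd' n
  exacts [absurd ⟨m, rfl⟩ hn, hodd m]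

lemma hasSum_two_mul_add_one_of_even_eq_zero {α : Type*} [AddCommMonoid α] [TopologicalSpace α]
    {f : ℕ → α} {a : α} (hf : HasSum f a) (heven : ∀ m, f (2 * m) = 0) :
    HasSum (fun m => f (2 * m + 1)) a := by
  have hinj : Function.Injective fun m : ℕ => 2 * m + 1 := fun _ _ h => by simpa using h
  refine (hinj.hasSum_iff fun n hn => ?_).mpr hf
  obtain ⟨m, rfl | rfl⟩ := Nat.even_or_odd' n
  exacts [heven m, absurd ⟨m, rfl⟩ hn]

noncomputable def besselITerm (s u : ℝ) (m : ℕ) : ℝ :=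
  (u / 2) ^ (2 * m) * (u / 2) ^ s / (m ! * Gamma (m + s + 1))

section Series

variable {s u : ℝ}

lemma Gamma_natCast_add_pos (hs : -1 < s) (m : ℕ) : 0 < Gamma (m + s + 1) :=
  Gamma_pos_of_pos (by linarith [m.cast_nonneg (α := ℝ)])

lemma besselITerm_pos (hs : -1 < s) (hu : 0 < u) (m : ℕ) : 0 < besselITerm s u m := by
  have := Gamma_natCast_add_pos hs m
  unfold besselITerm
  positivity

lemma besselITerm_succ (hs : -1 < s) (m : ℕ) :
    besselITerm s u (m + 1) = besselITerm s u m * ((u / 2) ^ 2 / ((m + 1) * (m + s + 1))) := by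
  have hms : (m : ℝ) + s + 1 ≠ 0 := by linarith [m.cast_nonneg (α := ℝ)]
  have hΓ : Gamma ((m + 1 : ℕ) + s + 1) = (m + s + 1) * Gamma (m + s + 1) := by
    rw [← Gamma_add_one hms]; push_cast; ring_nf
  have := (Gamma_natCast_add_pos hs m).ne'
  simp only [besselITerm, hΓ, factorial_succ, cast_mul]
  field_simp
  push_cast
  ring

lemma summable_besselITerm (hs : -1 < s) (hu : 0 < u) : Summable (besselITerm s u) := by
  refine summable_of_ratio_test_tendsto_lt_one zero_lt_one
    (Eventually.of_forall fun m => (besselITerm_pos hs hu m).ne') ?_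
  have hden : Tendsto (fun m : ℕ => ((m : ℝ) + 1) * (m + s + 1)) atTop atTop :=
    (tendsto_atTop_add_const_right _ _ tendsto_natCast_atTop_atTop).atTop_mul_atTop₀
      (tendsto_atTop_add_const_right _ _
        (tendsto_atTop_add_const_right _ _ tendsto_natCast_atTop_atTop))
  have hlim := hden.inv_tendsto_atTop.const_mul ((u / 2) ^ 2)
  rw [mul_zero] at hlim
  refine hlim.congr fun m => ?_
  have hm := besselITerm_pos hs hu m
  have hms : (0 : ℝ) < m + s + 1 := by linarith [m.cast_nonneg (α := ℝ)]
  rw [besselITerm_succ hs, norm_mul, norm_of_nonneg hm.le, mul_div_cancel_left₀ _ hm.ne',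
    norm_of_nonneg (by positivity), div_eq_mul_inv]
  rfl

lemma besselITerm_add_one (hs : -1 < s) (hu : 0 < u) (m : ℕ) :
    besselITerm (s + 1) u m = u / (2 * (m + s + 1)) * besselITerm s u m := by
  have hms : (m : ℝ) + s + 1 ≠ 0 := by linarith [m.cast_nonneg (α := ℝ)]
  have hΓ : Gamma (m + (s + 1) + 1) = (m + s + 1) * Gamma (m + s + 1) := by
    rw [← Gamma_add_one hms]; ring_nf
  have := (Gamma_natCast_add_pos hs m).ne'
  simp only [besselITerm, hΓ, rpow_add_one (by positivity : u / 2 ≠ 0)]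
  field_simp

lemma besselITerm_zero_eq_mul (hs : -1 < s) (hu : 0 < u) :
    besselITerm s u 0 = 2 * (s + 1) / u * besselITerm (s + 1) u 0 := by
  have : s + 1 ≠ 0 := by linarith
  rw [besselITerm_add_one hs hu, Nat.cast_zero, zero_add]
  field_simp

lemma besselITerm_succ_eq_add (hs : -1 < s) (hu : 0 < u) (m : ℕ) :
    besselITerm s u (m + 1) =
      2 * (s + 1) / u * besselITerm (s + 1) u (m + 1) + besselITerm (s + 2) u m := by
  have hne₁ : (m : ℝ) + 1 + s + 1 ≠ 0 := by linarith [m.cast_nonneg (α := ℝ)]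
  have hne₂ : (m : ℝ) + (s + 1) + 1 ≠ 0 := by linarith [m.cast_nonneg (α := ℝ)]
  have : s + 2 = s + 1 + 1 := by ring
  rw [this, besselITerm_add_one (s := s + 1) (by linarith) hu, besselITerm_add_one hs hu,
    besselITerm_add_one hs hu, besselITerm_succ hs]
  push_cast
  field_simp
  ring

lemma besselI_eq_tsum (s u : ℝ) : besselI s u = ∑' m, besselITerm s u m := rfl

lemma besselI_nonneg (hs : -1 < s) (hu : 0 < u) : 0 ≤ besselI s u :=
  tsum_nonneg fun m => (besselITerm_pos hs hu m).le

lemma besselI_eq_add (hs : -1 < s) (hu : 0 < u) :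
    besselI s u = 2 * (s + 1) / u * besselI (s + 1) u + besselI (s + 2) u := by
  have hs1 : -1 < s + 1 := by linarith
  have hs2 : -1 < s + 2 := by linarith
  have hsucc := (summable_nat_add_iff 1).mpr (summable_besselITerm hs1 hu)
  simp only [besselI_eq_tsum]
  rw [(summable_besselITerm hs hu).tsum_eq_zero_add, (summable_besselITerm hs1 hu).tsum_eq_zero_add,
    tsum_congr (besselITerm_succ_eq_add hs hu), (hsucc.mul_left _).tsum_add
    (summable_besselITerm hs2 hu), tsum_mul_left, besselITerm_zero_eq_mul hs hu]
  ring

end Series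

section Integrals

lemma continuous_one_sub_sq_rpow {p : ℝ} (hp : 0 ≤ p) :
    Continuous fun t : ℝ => (1 - t ^ 2) ^ p := by
  fun_prop (disch := exact Or.inr hp)

lemma one_sub_sq_rpow_nonneg {p t : ℝ} (ht : t ∈ Icc (-1 : ℝ) 1) : 0 ≤ (1 - t ^ 2) ^ p :=
  rpow_nonneg (by nlinarith [ht.1, ht.2]) _

lemma integral_eq_zero_of_odd {f : ℝ → ℝ} (hf : ∀ x, f (-x) = -f x) (a : ℝ) :
    ∫ x in -a..a, f x = 0 := by
  have h := integral_comp_neg (a := -a) (b := a) f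
  simp only [hf, intervalIntegral.integral_neg, neg_neg] at h
  linarith

lemma integral_eq_two_mul_of_even {f : ℝ → ℝ} (hf : ∀ x, f (-x) = f x) (hcont : Continuous f)
    (a : ℝ) : ∫ x in -a..a, f x = 2 * ∫ x in 0..a, f x := by
  have h := integral_comp_neg (a := 0) (b := a) f
  simp only [hf, neg_zero] at h
  rw [← integral_add_adjacent_intervals (b := 0) (hcont.intervalIntegrable _ _)
    (hcont.intervalIntegrable _ _), ← h]
  ring

lemma integral_rpow_mul_one_sub_rpow {a b : ℝ} (ha : 0 < a) (hb : 0 < b) :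
    ∫ x in (0:ℝ)..1, x ^ (a - 1) * (1 - x) ^ (b - 1) = Gamma a * Gamma b / Gamma (a + b) := by
  have h := Complex.Gamma_mul_Gamma_eq_betaIntegral
    (s := (a:ℂ)) (t := (b:ℂ)) (by simpa using ha) (by simpa using hb)
  have hcoe : Complex.betaIntegral (a:ℂ) (b:ℂ)
      = ((∫ x in (0:ℝ)..1, x ^ (a - 1) * (1 - x) ^ (b - 1) : ℝ) : ℂ) := by
    rw [Complex.betaIntegral, ← intervalIntegral.integral_ofReal]
    refine integral_congr fun x hx => ?_
    rw [uIcc_of_le zero_le_one] at hx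
    push_cast
    rw [Complex.ofReal_cpow hx.1, Complex.ofReal_cpow (by linarith [hx.2] : (0:ℝ) ≤ 1 - x)]
    push_cast
    ring
  rw [hcoe, ← Complex.ofReal_add, Complex.Gamma_ofReal, Complex.Gamma_ofReal,
    Complex.Gamma_ofReal, ← Complex.ofReal_mul, ← Complex.ofReal_mul] at h
  rw [Complex.ofReal_inj.mp h, mul_div_cancel_left₀ _ (Gamma_pos_of_pos (by linarith)).ne']

lemma setIntegral_Ioo_zero_one_comp_sq (g : ℝ → ℝ) :
    ∫ x in Ioo 0 1, g x = ∫ t in Ioo 0 1, 2 * t * g (t ^ 2) := by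
  have himage : (fun t : ℝ => t ^ 2) '' Ioo 0 1 = Ioo 0 1 := by
    ext x
    constructor
    · rintro ⟨t, ⟨ht0, ht1⟩, rfl⟩
      exact ⟨by positivity, by nlinarith⟩
    · rintro ⟨hx0, hx1⟩
      exact ⟨√x, ⟨sqrt_pos.mpr hx0, (sqrt_lt' one_pos).mpr (by simpa)⟩, sq_sqrt hx0.le⟩
  conv_lhs => rw [← himage]
  rw [integral_image_eq_integral_abs_deriv_smul measurableSet_Ioo
    (f' := fun t => 2 * t) (fun t _ => by simpa using (hasDerivAt_pow 2 t).hasDerivWithinAt)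
    ((pow_left_strictMonoOn₀ two_ne_zero).injOn.mono fun t ht => le_of_lt ht.1)]
  refine setIntegral_congr_fun measurableSet_Ioo fun t ht => ?_
  rw [smul_eq_mul, abs_of_pos (by linarith [ht.1])]

lemma integral_pow_two_mul_mul_one_sub_sq_rpow {p : ℝ} (hp : 0 ≤ p) (m : ℕ) :
    ∫ t in (-1:ℝ)..1, t ^ (2 * m) * (1 - t ^ 2) ^ p =
      Gamma (m + 1/2) * Gamma (p + 1) / Gamma (m + p + 3/2) := by
  have hcont : Continuous fun t : ℝ => t ^ (2 * m) * (1 - t ^ 2) ^ p := by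
    fun_prop (disch := exact Or.inr hp)
  have hpoint : ∀ t ∈ Ioo (0:ℝ) 1, 2 * (t ^ (2 * m) * (1 - t ^ 2) ^ p) =
      2 * t * ((t ^ 2) ^ ((m + 1/2 : ℝ) - 1) * (1 - t ^ 2) ^ (p + 1 - 1)) := by
    intro t ht
    have h : t * (t ^ 2) ^ ((m + 1/2 : ℝ) - 1) = t ^ (2 * m) := by
      have ht' : t = (t ^ 2) ^ (1/2 : ℝ) := by rw [← sqrt_eq_rpow, sqrt_sq ht.1.le]
      nth_rw 1 [ht']
      rw [← rpow_add (pow_pos ht.1 2), pow_mul, ← rpow_natCast (t ^ 2) m]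
      ring_nf
    rw [add_sub_cancel_right, ← h]
    ring
  rw [integral_eq_two_mul_of_even (fun t => by simp [pow_mul]) hcont,
    integral_of_le zero_le_one, integral_Ioc_eq_integral_Ioo, ← MeasureTheory.integral_const_mul,
    setIntegral_congr_fun measurableSet_Ioo hpoint,
    ← setIntegral_Ioo_zero_one_comp_sq (fun x => x ^ ((m + 1/2 : ℝ) - 1) * (1 - x) ^ (p + 1 - 1)),
    ← integral_Ioc_eq_integral_Ioo, ← integral_of_le zero_le_one,
    integral_rpow_mul_one_sub_rpow (by positivity) (by linarith)]
  ring_nf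

lemma integral_pow_two_mul_add_one_mul_one_sub_sq_rpow (p : ℝ) (m : ℕ) :
    ∫ t in (-1:ℝ)..1, t ^ (2 * m + 1) * (1 - t ^ 2) ^ p = 0 :=
  integral_eq_zero_of_odd (fun t => by rw [Odd.neg_pow ⟨m, rfl⟩, neg_sq, neg_mul]) 1

lemma hasSum_integral_exp_mul {g : ℝ → ℝ} (hg : IntervalIntegrable g volume (-1) 1) (u : ℝ) :
    HasSum (fun n : ℕ => u ^ n / n ! * ∫ t in (-1:ℝ)..1, t ^ n * g t)
      (∫ t in (-1:ℝ)..1, exp (u * t) * g t) := by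
  simp only [← intervalIntegral.integral_const_mul]
  refine intervalIntegral.hasSum_integral_of_dominated_convergence
    (fun n t => |u| ^ n / n ! * |g t|) (fun n => ?_) (fun n => ?_)
    (ae_of_all _ fun t _ => (summable_pow_div_factorial |u|).mul_right _) ?_
    (ae_of_all _ fun t _ => ?_)
  · exact (((continuous_pow n).aestronglyMeasurable.mul hg.def'.1).const_mul _)
  · refine ae_of_all _ fun t ht => ?_
    rw [uIoc_of_le (by norm_num)] at ht
    have ht1 : |t| ≤ 1 := abs_le.mpr ⟨ht.1.le, ht.2⟩
    simp only [norm_mul, norm_div, norm_pow, Real.norm_eq_abs, Nat.abs_cast]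
    gcongr
    exact mul_le_of_le_one_left (abs_nonneg _) (pow_le_one₀ (abs_nonneg t) ht1)
  · simp_rw [tsum_mul_right]
    exact hg.abs.const_mul _
  · have := (NormedSpace.expSeries_div_hasSum_exp (u * t)).mul_right (g t)
    rw [← exp_eq_exp_ℝ] at this
    simpa only [mul_pow, mul_assoc, mul_div_right_comm] using this

end Integrals

lemma Gamma_add_half_mul_Gamma_add_one (n : ℕ) :
    Gamma (n / 2 + 1/2) * Gamma (n / 2 + 1) * 2 ^ n = √π * n ! := by
  have h := Gamma_mul_Gamma_add_half (n / 2 + 1/2)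
  rw [show (n / 2 + 1/2 + 1/2 : ℝ) = n / 2 + 1 by ring, show 2 * (n / 2 + 1/2 : ℝ) = n + 1 by ring,
    show (1 - (n + 1) : ℝ) = -n by ring, Gamma_nat_eq_factorial, rpow_neg zero_le_two,
    rpow_natCast] at h
  rw [h]
  field_simp

section PoissonIntegral

variable {p u : ℝ}

lemma besselITerm_eq_mul_integral_even (hp : 0 ≤ p) (hu : 0 < u) (m : ℕ) :
    besselITerm (p + 1/2) u m = (u / 2) ^ (p + 1/2) / (√π * Gamma (p + 1)) *
      (u ^ (2 * m) / (2 * m) ! * ∫ t in (-1:ℝ)..1, t ^ (2 * m) * (1 - t ^ 2) ^ p) := by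
  have hdup := Gamma_add_half_mul_Gamma_add_one (2 * m)
  push_cast at hdup
  rw [mul_div_cancel_left₀ _ two_ne_zero, Gamma_nat_eq_factorial] at hdup
  have h1 := Gamma_pos_of_pos (by linarith : 0 < p + 1)
  have h2 := Gamma_pos_of_pos (by positivity : 0 < (m : ℝ) + p + 3/2)
  rw [integral_pow_two_mul_mul_one_sub_sq_rpow hp, besselITerm,
    show (m : ℝ) + (p + 1/2) + 1 = m + p + 3/2 by ring]
  -- keeps `field_simp` from normalising the argument of `Gamma`
  generalize Gamma (m + 1/2) = G at hdup ⊢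
  field_simp
  rw [mul_assoc, ← hdup, div_pow]
  field_simp

lemma besselITerm_eq_mul_integral_odd (hp : 0 ≤ p) (hu : 0 < u) (m : ℕ) :
    besselITerm (p + 1/2 + 1) u m = (u / 2) ^ (p + 1/2) / (√π * Gamma (p + 1)) *
      (u ^ (2 * m + 1) / (2 * m + 1) ! *
        ∫ t in (-1:ℝ)..1, t ^ (2 * m + 1) * (t * (1 - t ^ 2) ^ p)) := by
  have hdup := Gamma_add_half_mul_Gamma_add_one (2 * m + 1)
  push_cast at hdup
  rw [show ((2 * m + 1) / 2 + 1/2 : ℝ) = m + 1 by ring,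
    show ((2 * m + 1) / 2 + 1 : ℝ) = m + 1 + 1/2 by ring, Gamma_nat_eq_factorial] at hdup
  have h1 := Gamma_pos_of_pos (by linarith : 0 < p + 1)
  have h2 := Gamma_pos_of_pos (by positivity : 0 < (m : ℝ) + 1 + p + 3/2)
  have hmoment : ∫ t in (-1:ℝ)..1, t ^ (2 * m + 1) * (t * (1 - t ^ 2) ^ p) =
      ∫ t in (-1:ℝ)..1, t ^ (2 * (m + 1)) * (1 - t ^ 2) ^ p :=
    integral_congr fun t _ => by ring
  rw [hmoment, integral_pow_two_mul_mul_one_sub_sq_rpow hp, besselITerm,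
    show (m : ℝ) + (p + 1/2 + 1) + 1 = m + 1 + p + 3/2 by ring,
    rpow_add_one (by positivity : u / 2 ≠ 0)]
  push_cast
  generalize Gamma (m + 1 + 1/2) = G at hdup ⊢
  field_simp
  rw [mul_assoc, ← hdup, div_pow]
  field_simp
  ring

theorem besselI_eq_integral (hp : 0 ≤ p) (hu : 0 < u) :
    besselI (p + 1/2) u = (u / 2) ^ (p + 1/2) / (√π * Gamma (p + 1)) *
      ∫ t in (-1:ℝ)..1, exp (u * t) * (1 - t ^ 2) ^ p := by
  have hsum := hasSum_integral_exp_mul ((continuous_one_sub_sq_rpow hp).intervalIntegrable _ _) u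
  have heven := hasSum_two_mul_of_odd_eq_zero hsum fun m => by
    rw [integral_pow_two_mul_add_one_mul_one_sub_sq_rpow, mul_zero]
  rw [besselI_eq_tsum, tsum_congr (besselITerm_eq_mul_integral_even hp hu),
    (heven.mul_left _).tsum_eq]

theorem besselI_add_one_eq_integral (hp : 0 ≤ p) (hu : 0 < u) :
    besselI (p + 1/2 + 1) u = (u / 2) ^ (p + 1/2) / (√π * Gamma (p + 1)) *
      ∫ t in (-1:ℝ)..1, exp (u * t) * (t * (1 - t ^ 2) ^ p) := by
  have hsum := hasSum_integral_exp_mul (g := fun t => t * (1 - t ^ 2) ^ p)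
    ((continuous_id.mul (continuous_one_sub_sq_rpow hp)).intervalIntegrable (-1) 1) u
  have hodd := hasSum_two_mul_add_one_of_even_eq_zero hsum fun m => by
    rw [← mul_zero (u ^ (2 * m) / (2 * m) !),
      ← integral_pow_two_mul_add_one_mul_one_sub_sq_rpow p m]
    exact congrArg _ (integral_congr fun t _ => by ring)
  rw [besselI_eq_tsum, tsum_congr (besselITerm_eq_mul_integral_odd hp hu),
    (hodd.mul_left _).tsum_eq]

end PoissonIntegral

section Estimate

variable {p : ℝ}

lemma mul_one_sub_mul_exp_le (u t : ℝ) :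
    u * (1 - t) * exp (u * t) ≤ 2 * exp (u * ((1/2) * t + 1/2)) := by
  have h := add_one_le_exp (u * (1 - t) / 2)
  calc u * (1 - t) * exp (u * t) ≤ 2 * exp (u * (1 - t) / 2) * exp (u * t) :=
        mul_le_mul_of_nonneg_right (by linarith [exp_pos (u * (1 - t) / 2)]) (exp_pos _).le
    _ = 2 * exp (u * ((1/2) * t + 1/2)) := by rw [mul_assoc, ← exp_add]; ring_nf

lemma integral_exp_mul_half_add_half_le (hp : 0 ≤ p) (u : ℝ) :
    ∫ t in (-1:ℝ)..1, exp (u * ((1/2) * t + 1/2)) * (1 - t ^ 2) ^ p ≤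
      2 * 4 ^ p * ∫ t in (-1:ℝ)..1, exp (u * t) * (1 - t ^ 2) ^ p := by
  have hsubst := integral_comp_mul_add (a := -1) (b := 1)
    (fun x => exp (u * x) * (1 - (2 * x - 1) ^ 2) ^ p) (by norm_num : (1/2 : ℝ) ≠ 0) (1/2)
  norm_num at hsubst
  have hpoint : ∀ x ∈ Icc (0:ℝ) 1,
      exp (u * x) * (1 - (2 * x - 1) ^ 2) ^ p ≤ 4 ^ p * (exp (u * x) * (1 - x ^ 2) ^ p) := by
    intro x ⟨hx0, hx1⟩
    rw [mul_left_comm, ← mul_rpow (by norm_num) (by nlinarith)]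
    gcongr
    · nlinarith
    · nlinarith
  calc ∫ t in (-1:ℝ)..1, exp (u * ((1/2) * t + 1/2)) * (1 - t ^ 2) ^ p
      = 2 * ∫ x in (0:ℝ)..1, exp (u * x) * (1 - (2 * x - 1) ^ 2) ^ p := by
        rw [← hsubst]; exact integral_congr fun t _ => by ring_nf
    _ ≤ 2 * ∫ x in (0:ℝ)..1, 4 ^ p * (exp (u * x) * (1 - x ^ 2) ^ p) := by
        gcongr
        exact integral_mono_on zero_le_one
          ((by fun_prop (disch := exact Or.inr hp) : Continuous _).intervalIntegrable _ _)
          ((by fun_prop (disch := exact Or.inr hp) : Continuous _).intervalIntegrable _ _) hpoint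
    _ = 2 * 4 ^ p * ∫ x in (0:ℝ)..1, exp (u * x) * (1 - x ^ 2) ^ p := by
        rw [intervalIntegral.integral_const_mul, mul_assoc]
    _ ≤ 2 * 4 ^ p * ∫ t in (-1:ℝ)..1, exp (u * t) * (1 - t ^ 2) ^ p := by
        gcongr
        refine integral_mono_interval (by norm_num) zero_le_one le_rfl ?_
          ((by fun_prop (disch := exact Or.inr hp) : Continuous _).intervalIntegrable _ _)
        refine (ae_restrict_mem measurableSet_Ioc).mono fun t ht => ?_
        exact mul_nonneg (exp_pos _).le (one_sub_sq_rpow_nonneg ⟨ht.1.le, ht.2⟩)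

lemma mul_integral_exp_mul_one_sub_le (hp : 0 ≤ p) (u : ℝ) :
    u * ∫ t in (-1:ℝ)..1, exp (u * t) * ((1 - t) * (1 - t ^ 2) ^ p) ≤
      4 ^ (p + 1) * ∫ t in (-1:ℝ)..1, exp (u * t) * (1 - t ^ 2) ^ p := by
  calc u * ∫ t in (-1:ℝ)..1, exp (u * t) * ((1 - t) * (1 - t ^ 2) ^ p)
      = ∫ t in (-1:ℝ)..1, u * (1 - t) * exp (u * t) * (1 - t ^ 2) ^ p := by
        rw [← intervalIntegral.integral_const_mul]
        exact integral_congr fun t _ => by ring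
    _ ≤ ∫ t in (-1:ℝ)..1, 2 * exp (u * ((1/2) * t + 1/2)) * (1 - t ^ 2) ^ p := by
        refine integral_mono_on (by norm_num)
          ((by fun_prop (disch := exact Or.inr hp) : Continuous _).intervalIntegrable _ _)
          ((by fun_prop (disch := exact Or.inr hp) : Continuous _).intervalIntegrable _ _)
          fun t ht => ?_
        exact mul_le_mul_of_nonneg_right (mul_one_sub_mul_exp_le u t) (one_sub_sq_rpow_nonneg ht)
    _ ≤ 2 * (2 * 4 ^ p * ∫ t in (-1:ℝ)..1, exp (u * t) * (1 - t ^ 2) ^ p) := by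
        simp only [mul_assoc, intervalIntegral.integral_const_mul]
        gcongr
        simpa only [mul_assoc] using integral_exp_mul_half_add_half_le hp u
    _ = 4 ^ (p + 1) * ∫ t in (-1:ℝ)..1, exp (u * t) * (1 - t ^ 2) ^ p := by
        rw [rpow_add_one (by norm_num)]; ring

end Estimate

section Main

variable {p u : ℝ}

lemma besselI_sub_besselI_add_one_eq_integral (hp : 0 ≤ p) (hu : 0 < u) :
    besselI (p + 1/2) u - besselI (p + 1/2 + 1) u = (u / 2) ^ (p + 1/2) / (√π * Gamma (p + 1)) *
      ∫ t in (-1:ℝ)..1, exp (u * t) * ((1 - t) * (1 - t ^ 2) ^ p) := by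
  rw [besselI_eq_integral hp hu, besselI_add_one_eq_integral hp hu, ← mul_sub,
    ← integral_sub ((by fun_prop (disch := exact Or.inr hp) : Continuous _).intervalIntegrable _ _)
      ((by fun_prop (disch := exact Or.inr hp) : Continuous _).intervalIntegrable _ _)]
  exact congrArg _ (integral_congr fun t _ => by ring)

theorem besselI_add_one_le (hp : 0 ≤ p) (hu : 0 < u) :
    besselI (p + 1/2 + 1) u ≤ besselI (p + 1/2) u := by
  have hc : 0 ≤ (u / 2) ^ (p + 1/2) / (√π * Gamma (p + 1)) := by
    have := Gamma_pos_of_pos (by linarith : 0 < p + 1); positivity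
  have hint : 0 ≤ ∫ t in (-1:ℝ)..1, exp (u * t) * ((1 - t) * (1 - t ^ 2) ^ p) :=
    integral_nonneg (by norm_num) fun t ht =>
      mul_nonneg (exp_pos _).le (mul_nonneg (by linarith [ht.2]) (one_sub_sq_rpow_nonneg ht))
  rw [← sub_nonneg, besselI_sub_besselI_add_one_eq_integral hp hu]
  exact mul_nonneg hc hint

theorem mul_besselI_sub_besselI_add_one_le (hp : 0 ≤ p) (hu : 0 < u) :
    u * (besselI (p + 1/2) u - besselI (p + 1/2 + 1) u) ≤ 4 ^ (p + 1) * besselI (p + 1/2) u := by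
  have hc : 0 ≤ (u / 2) ^ (p + 1/2) / (√π * Gamma (p + 1)) := by
    have := Gamma_pos_of_pos (by linarith : 0 < p + 1); positivity
  rw [besselI_sub_besselI_add_one_eq_integral hp hu, besselI_eq_integral hp hu, mul_left_comm,
    mul_left_comm (4 ^ (p + 1))]
  exact mul_le_mul_of_nonneg_left (mul_integral_exp_mul_one_sub_le hp u) hc

end Main

/-- For `α ≥ -1/2`, `|I_{α+1}(u) - I_α(u)| ≤ C u⁻¹ I_{α+1}(u)` on `(0,∞)`. -/
theorem besselI_succ_sub_le (α : ℝ) (hα : -(1/2 : ℝ) ≤ α) :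
    ∃ C : ℝ, 0 < C ∧ ∀ u : ℝ, 0 < u →
      |besselI (α + 1) u - besselI α u| ≤ C * u⁻¹ * besselI (α + 1) u := by
  set p := α + 1/2 with hp_def
  have hp : 0 ≤ p := by linarith
  have hα1 : 0 < α + 1 := by linarith
  refine ⟨2 * (α + 1) + 4 ^ (p + 1), by positivity, fun u hu => ?_⟩
  have hrec := besselI_eq_add (by linarith : -1 < α) hu
  have hI : 0 ≤ besselI (α + 1) u := besselI_nonneg (by linarith) hu
  have hle := besselI_add_one_le hp hu
  have hmul := mul_besselI_sub_besselI_add_one_le hp hu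
  rw [show p + 1/2 = α + 1 by ring, show α + 1 + 1 = α + 2 by ring] at hle hmul
  have hdiff : besselI (α + 1) u - besselI (α + 2) u ≤ 4 ^ (p + 1) * u⁻¹ * besselI (α + 1) u := by
    rw [mul_comm _ u⁻¹, mul_assoc, le_inv_mul_iff₀ hu]; linarith
  have hX : 0 ≤ (α + 1) * u⁻¹ * besselI (α + 1) u := by positivity
  have hY : 0 ≤ 4 ^ (p + 1) * u⁻¹ * besselI (α + 1) u := by positivity
  rw [hrec, div_eq_mul_inv, abs_le]
  constructor <;> linarith
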